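/- For every n ≥ 1, the map φ : RP^n → AVR^m(S^n; π) defined by φ([x]) = (1/2)δ_x + (1/2)δ_{−x} is a topological embedding of real projective space RP^n into the anti-Vietoris–Rips metric thickening AVR^m(S^n; π). -/

import Mathlib

open MeasureTheory
open scoped ENNReal

noncomputable section

/-- Euclidean space `ℝ^{n+1}`. -/
abbrev E (n : ℕ) := EuclideanSpace ℝ (Fin (n + 1))

/-- The unit `n`-sphere in `ℝ^{n+1}`. -/
abbrev Sph (n : ℕ) := ↥(Metric.sphere (0 : E n) 1)

/-- The geodesic distance on the unit sphere: the angle between the two unit vectors. -/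
def gdist {n : ℕ} (x y : Sph n) : ℝ := InnerProductGeometry.angle (x : E n) (y : E n)

/-- The antipodal map on the sphere. -/
def antipode {n : ℕ} (x : Sph n) : Sph n :=
  ⟨-(x : E n), by
    rw [mem_sphere_zero_iff_norm, norm_neg]
    exact mem_sphere_zero_iff_norm.mp x.2⟩

/-- Real projective space `RP^n = S^n/(x ∼ -x)`, with the quotient topology. -/
def RP (n : ℕ) := Quot (fun x y : Sph n => y = antipode x)

instance (n : ℕ) : TopologicalSpace (RP n) := by unfold RP; infer_instance

/-- The set of transport plans (couplings) between two measures. -/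
def couplings {X : Type*} [MeasurableSpace X] (μ ν : Measure X) : Set (Measure (X × X)) :=
  {π | π.map Prod.fst = μ ∧ π.map Prod.snd = ν}

/-- The 1-Wasserstein distance on measures on the sphere, with respect to the geodesic metric. -/
def W1 {n : ℕ} (μ ν : Measure (Sph n)) : ℝ≥0∞ :=
  ⨅ π ∈ couplings μ ν, ∫⁻ p, ENNReal.ofReal (gdist p.1 p.2) ∂π

/-- The topology induced by the 1-Wasserstein metric (generated by W1-balls). -/
instance (n : ℕ) : TopologicalSpace (Measure (Sph n)) :=
  TopologicalSpace.generateFrom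
    {B | ∃ (μ : Measure (Sph n)) (ε : ℝ), 0 < ε ∧ B = {ν | W1 μ ν < ENNReal.ofReal ε}}

/-- The anti-Vietoris–Rips metric thickening of the sphere `S^n` at scale `r`: all finitely
supported probability measures whose support has spread at least `r` in the geodesic metric. -/
def avrmSet (n : ℕ) (r : ℝ) : Set (Measure (Sph n)) :=
  {μ | ∃ (s : Finset (Sph n)) (w : Sph n → ℝ),
    (∀ x ∈ s, 0 < w x) ∧ (∑ x ∈ s, w x) = 1 ∧
    (∀ x ∈ s, ∀ y ∈ s, x ≠ y → r ≤ gdist x y) ∧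
    μ = ∑ x ∈ s, ENNReal.ofReal (w x) • Measure.dirac x}

/-- The anti-Vietoris–Rips metric thickening as a topological space (1-Wasserstein topology). -/
abbrev AVRm (n : ℕ) (r : ℝ) := ↥(avrmSet n r)

lemma antipode_antipode {n : ℕ} (x : Sph n) : antipode (antipode x) = x :=
  Subtype.ext (neg_neg _)

/-- The measure `(1/2)δ_x + (1/2)δ_{-x}` on the sphere. -/
def phi0 (n : ℕ) (x : Sph n) : Measure (Sph n) :=
  (2⁻¹ : ℝ≥0∞) • Measure.dirac x + (2⁻¹ : ℝ≥0∞) • Measure.dirac (antipode x)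

/-- The map `RP^n → AVR^m(S^n; π)`, `[x] ↦ (1/2)δ_x + (1/2)δ_{-x}` (valued in measures). -/
def phi (n : ℕ) : RP n → Measure (Sph n) :=
  Quot.lift (phi0 n) (by
    intro x y h
    subst h
    unfold phi0
    rw [antipode_antipode]; exact add_comm _ _)

/-!
Since `φ[x]` is the uniform probability measure on `{±x}`, any coupling of `φ[x]` and `φ[y]`
moves mass between `{±x}` and `{±y}`, so `W₁(φ[x], φ[y])` is the projective distance
`min (d(x, y)) (π - d(x, y))`; transporting `x ↦ y`, `-x ↦ -y` shows more generally that
`W₁(μ, φ[y]) ≤ W₁(μ, φ[x]) + d(x, y)` for every `μ`. Hence `φ` is continuous and injective,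
and its image is Hausdorff in the `W₁`-ball topology (separate `φ[x]`, `φ[y]` by balls of radius
half their distance). As `RP^n` is compact, `φ` is therefore an embedding.
-/

open InnerProductGeometry Topology Filter Set

lemma Continuous.isEmbedding_of_t2Space_range {X Y : Type*} [TopologicalSpace X]
    [TopologicalSpace Y] [CompactSpace X] {f : X → Y} [T2Space (range f)] (hf : Continuous f)
    (hinj : Function.Injective f) : IsEmbedding f :=
  IsEmbedding.subtypeVal.comp
    (hf.rangeFactorization.isClosedEmbedding (rangeFactorization_injective.2 hinj)).isEmbedding

variable {n : ℕ}

lemma Sph.norm_coe (x : Sph n) : ‖(x : E n)‖ = 1 := mem_sphere_zero_iff_norm.mp x.2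

lemma Sph.coe_ne_zero (x : Sph n) : (x : E n) ≠ 0 :=
  ne_zero_of_norm_ne_zero (by simp)

lemma gdist_comm (x y : Sph n) : gdist x y = gdist y x := angle_comm _ _

lemma gdist_self (x : Sph n) : gdist x x = 0 := angle_self (Sph.coe_ne_zero x)

lemma gdist_le_pi (x y : Sph n) : gdist x y ≤ Real.pi := angle_le_pi _ _

lemma gdist_triangle (x y z : Sph n) : gdist x z ≤ gdist x y + gdist y z :=
  angle_le_angle_add_angle _ _ _

lemma gdist_antipode_left (x y : Sph n) : gdist (antipode x) y = Real.pi - gdist x y :=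
  angle_neg_left _ _

lemma gdist_antipode_right (x y : Sph n) : gdist x (antipode y) = Real.pi - gdist x y :=
  angle_neg_right _ _

lemma gdist_antipode_antipode (x y : Sph n) : gdist (antipode x) (antipode y) = gdist x y :=
  angle_neg_neg _ _

lemma gdist_antipode_self (x : Sph n) : gdist x (antipode x) = Real.pi :=
  angle_self_neg_of_nonzero (Sph.coe_ne_zero x)

lemma antipode_ne_self (x : Sph n) : antipode x ≠ x := fun h => by
  have hpi := gdist_antipode_self x
  rw [h, gdist_self] at hpi
  exact Real.pi_ne_zero hpi.symm

lemma cos_gdist (x y : Sph n) : Real.cos (gdist x y) = inner ℝ (x : E n) (y : E n) := by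
  rw [gdist, cos_angle, Sph.norm_coe, Sph.norm_coe, mul_one, div_one]

lemma eq_of_gdist_eq_zero {x y : Sph n} (h : gdist x y = 0) : x = y := by
  have hinner := cos_gdist x y
  rw [h, Real.cos_zero] at hinner
  exact Subtype.ext ((inner_eq_one_iff_of_norm_eq_one (Sph.norm_coe x) (Sph.norm_coe y)).1
    hinner.symm)

lemma eq_antipode_of_gdist_eq_pi {x y : Sph n} (h : gdist x y = Real.pi) : y = antipode x := by
  have hinner := cos_gdist y x
  rw [gdist_comm, h, Real.cos_pi] at hinner
  exact Subtype.ext ((inner_eq_neg_one_iff_of_norm_eq_one (Sph.norm_coe y) (Sph.norm_coe x)).1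
    hinner.symm)

lemma continuous_gdist : Continuous fun p : Sph n × Sph n => gdist p.1 p.2 :=
  continuous_iff_continuousAt.2 fun p =>
    (continuousAt_angle (Sph.coe_ne_zero p.1) (Sph.coe_ne_zero p.2)).comp
      (f := fun p : Sph n × Sph n => ((p.1 : E n), (p.2 : E n))) (by fun_prop)

lemma measurable_ofReal_gdist :
    Measurable fun p : Sph n × Sph n => ENNReal.ofReal (gdist p.1 p.2) :=
  (ENNReal.continuous_ofReal.comp continuous_gdist).measurable

/-- The distance between the lines through `x` and through `y`. -/
def projDist (x y : Sph n) : ℝ := min (gdist x y) (Real.pi - gdist x y)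

lemma projDist_le_gdist (x y : Sph n) : projDist x y ≤ gdist x y := min_le_left _ _

lemma projDist_nonneg (x y : Sph n) : 0 ≤ projDist x y :=
  le_min (angle_nonneg _ _) (sub_nonneg.2 (gdist_le_pi x y))

lemma projDist_comm (x y : Sph n) : projDist x y = projDist y x := by
  rw [projDist, projDist, gdist_comm]

lemma projDist_antipode_right (x y : Sph n) : projDist x (antipode y) = projDist x y := by
  rw [projDist, projDist, gdist_antipode_right, sub_sub_cancel, min_comm]

lemma projDist_antipode_left (x y : Sph n) : projDist (antipode x) y = projDist x y := by
  rw [projDist_comm, projDist_antipode_right, projDist_comm]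

lemma projDist_eq_gdist_or (x y : Sph n) :
    projDist x y = gdist x y ∨ projDist x y = gdist x (antipode y) := by
  rw [gdist_antipode_right]
  exact min_choice _ _

def RP.mk (x : Sph n) : RP n := Quot.mk _ x

lemma RP.mk_eq_mk_of_projDist_eq_zero {x y : Sph n} (h : projDist x y = 0) :
    RP.mk x = RP.mk y := by
  rcases projDist_eq_gdist_or x y with hd | hd <;> rw [hd] at h
  · rw [eq_of_gdist_eq_zero h]
  · rw [gdist_antipode_right, sub_eq_zero] at h
    exact Quot.sound (eq_antipode_of_gdist_eq_pi h.symm)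

section Couplings

variable {X : Type*} [MeasurableSpace X] {μ ν : Measure X} {π : Measure (X × X)}

lemma measure_univ_of_mem_couplings (hπ : π ∈ couplings μ ν) : π univ = ν univ := by
  rw [← hπ.2, Measure.map_apply measurable_snd MeasurableSet.univ, preimage_univ]

lemma ae_fst_of_mem_couplings (hπ : π ∈ couplings μ ν) {P : X → Prop} (h : ∀ᵐ x ∂μ, P x) :
    ∀ᵐ p ∂π, P p.1 :=
  ae_of_ae_map measurable_fst.aemeasurable (hπ.1 ▸ h)

lemma ae_snd_of_mem_couplings (hπ : π ∈ couplings μ ν) {P : X → Prop} (h : ∀ᵐ x ∂ν, P x) :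
    ∀ᵐ p ∂π, P p.2 :=
  ae_of_ae_map measurable_snd.aemeasurable (hπ.2 ▸ h)

end Couplings

lemma W1_self (μ : Measure (Sph n)) : W1 μ μ = 0 := by
  have hdiag : Measurable fun z : Sph n => (z, z) := measurable_id.prodMk measurable_id
  have hmem : μ.map (fun z => (z, z)) ∈ couplings μ μ := by
    constructor
    · rw [Measure.map_map measurable_fst hdiag]
      exact Measure.map_id
    · rw [Measure.map_map measurable_snd hdiag]
      exact Measure.map_id
  refine nonpos_iff_eq_zero.1 ((iInf₂_le _ hmem).trans_eq ?_)
  simp [lintegral_map measurable_ofReal_gdist hdiag, gdist_self]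

lemma W1_map_le_add (μ ν : Measure (Sph n)) [IsProbabilityMeasure ν] {T : Sph n → Sph n}
    (hT : Measurable T) {c : ℝ} (hc : ∀ᵐ z ∂ν, gdist z (T z) ≤ c) :
    W1 μ (ν.map T) ≤ W1 μ ν + ENNReal.ofReal c := by
  suffices key : ∀ π ∈ couplings μ ν, W1 μ (ν.map T) ≤
      (∫⁻ p, ENNReal.ofReal (gdist p.1 p.2) ∂π) + ENNReal.ofReal c by
    simpa only [W1, ENNReal.iInf_add] using le_iInf₂ key
  intro π hπ
  set g : Sph n × Sph n → Sph n × Sph n := Prod.map id T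
  have hg : Measurable g := measurable_id.prodMap hT
  have hmem : π.map g ∈ couplings μ (ν.map T) := by
    constructor
    · rw [Measure.map_map measurable_fst hg]
      exact hπ.1
    · rw [Measure.map_map measurable_snd hg, ← hπ.2, Measure.map_map hT measurable_snd]
      rfl
  have hcost : ∀ᵐ p ∂π, ENNReal.ofReal (gdist p.1 (T p.2)) ≤
      ENNReal.ofReal (gdist p.1 p.2) + ENNReal.ofReal c := by
    filter_upwards [ae_snd_of_mem_couplings hπ hc] with p hp
    grw [← ENNReal.ofReal_add_le, gdist_triangle p.1 p.2 (T p.2), hp]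
  calc W1 μ (ν.map T)
      ≤ ∫⁻ p, ENNReal.ofReal (gdist p.1 p.2) ∂(π.map g) := iInf₂_le _ hmem
    _ = ∫⁻ p, ENNReal.ofReal (gdist p.1 (T p.2)) ∂π := lintegral_map measurable_ofReal_gdist hg
    _ ≤ ∫⁻ p, (ENNReal.ofReal (gdist p.1 p.2) + ENNReal.ofReal c) ∂π := lintegral_mono_ae hcost
    _ = (∫⁻ p, ENNReal.ofReal (gdist p.1 p.2) ∂π) + ENNReal.ofReal c := by
      rw [lintegral_add_right _ measurable_const, lintegral_const,
        measure_univ_of_mem_couplings hπ, measure_univ, mul_one]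

lemma phi0_antipode (x : Sph n) : phi0 n (antipode x) = phi0 n x := by
  rw [phi0, phi0, antipode_antipode]
  exact add_comm _ _

instance (x : Sph n) : IsProbabilityMeasure (phi0 n x) :=
  ⟨by simp [phi0, ENNReal.inv_two_add_inv_two]⟩

lemma ae_phi0 (x : Sph n) : ∀ᵐ z ∂phi0 n x, z = x ∨ z = antipode x := by
  simp [phi0, ae_dirac_eq]

lemma W1_phi0_le_add (μ : Measure (Sph n)) (x y : Sph n) :
    W1 μ (phi0 n y) ≤ W1 μ (phi0 n x) + ENNReal.ofReal (gdist x y) := by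
  classical
  set T : Sph n → Sph n := fun z => if z = x then y else antipode y
  have hT : Measurable T := Measurable.ite (measurableSet_singleton x) measurable_const
    measurable_const
  have hTx : T x = y := if_pos rfl
  have hTax : T (antipode x) = antipode y := if_neg (antipode_ne_self x)
  have hmap : (phi0 n x).map T = phi0 n y := by
    rw [phi0, Measure.map_add _ _ hT, Measure.map_smul, Measure.map_smul,
      Measure.map_dirac' hT, Measure.map_dirac' hT, hTx, hTax, phi0]
  rw [← hmap]
  refine W1_map_le_add μ (phi0 n x) hT ?_
  filter_upwards [ae_phi0 x] with z hz
  rcases hz with rfl | rfl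
  · rw [hTx]
  · rw [hTax, gdist_antipode_antipode]

lemma W1_phi0_le_add_projDist (μ : Measure (Sph n)) (x y : Sph n) :
    W1 μ (phi0 n y) ≤ W1 μ (phi0 n x) + ENNReal.ofReal (projDist x y) := by
  rcases projDist_eq_gdist_or x y with h | h <;> rw [h]
  · exact W1_phi0_le_add μ x y
  · rw [← phi0_antipode y]
    exact W1_phi0_le_add μ x (antipode y)

lemma W1_phi0_phi0 (x y : Sph n) :
    W1 (phi0 n x) (phi0 n y) = ENNReal.ofReal (projDist x y) := by
  refine le_antisymm ?_ (le_iInf₂ fun π hπ => ?_)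
  · simpa [W1_self] using W1_phi0_le_add_projDist (phi0 n x) x y
  have hsupp : ∀ᵐ p ∂π, projDist x y ≤ gdist p.1 p.2 := by
    filter_upwards [ae_fst_of_mem_couplings hπ (ae_phi0 x),
      ae_snd_of_mem_couplings hπ (ae_phi0 y)] with p hx hy
    refine (projDist_le_gdist p.1 p.2).trans_eq' ?_
    rcases hx with hx | hx <;> rcases hy with hy | hy <;>
      simp only [hx, hy, projDist_antipode_left, projDist_antipode_right]
  have : IsProbabilityMeasure π := ⟨by rw [measure_univ_of_mem_couplings hπ, measure_univ]⟩
  calc ENNReal.ofReal (projDist x y) = ∫⁻ _, ENNReal.ofReal (projDist x y) ∂π := by simp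
    _ ≤ ∫⁻ p, ENNReal.ofReal (gdist p.1 p.2) ∂π :=
      lintegral_mono_ae (hsupp.mono fun p hp => ENNReal.ofReal_le_ofReal hp)

lemma isOpen_W1_ball (μ : Measure (Sph n)) {ε : ℝ} (hε : 0 < ε) :
    IsOpen {ν | W1 μ ν < ENNReal.ofReal ε} :=
  TopologicalSpace.isOpen_generateFrom_of_mem ⟨μ, ε, hε, rfl⟩

lemma upperSemicontinuous_W1_phi0 (μ : Measure (Sph n)) :
    UpperSemicontinuous fun x => W1 μ (phi0 n x) := by
  intro x c hc
  have hgdist : Tendsto (gdist x) (𝓝 x) (𝓝 0) := by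
    simpa [gdist_self, Function.comp_def] using
      (continuous_gdist.comp (Continuous.prodMk_right x)).tendsto x
  have hlim : Tendsto (fun y => W1 μ (phi0 n x) + ENNReal.ofReal (gdist x y)) (𝓝 x)
      (𝓝 (W1 μ (phi0 n x))) := by
    simpa using tendsto_const_nhds.add (ENNReal.tendsto_ofReal hgdist)
  filter_upwards [hlim.eventually (gt_mem_nhds hc)] with y hy
  exact (W1_phi0_le_add μ x y).trans_lt hy

lemma continuous_phi : Continuous (phi n) := by
  refine continuous_quot_lift _ (continuous_generateFrom_iff.2 ?_)
  rintro _ ⟨μ, ε, -, rfl⟩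
  exact (upperSemicontinuous_W1_phi0 μ).isOpen_preimage _

lemma injective_phi : Function.Injective (phi n) := by
  rintro ⟨x⟩ ⟨y⟩ hxy
  refine RP.mk_eq_mk_of_projDist_eq_zero (le_antisymm ?_ (projDist_nonneg x y))
  have h : W1 (phi0 n x) (phi0 n y) = 0 := by
    rw [show phi0 n y = phi0 n x from hxy.symm, W1_self]
  rwa [W1_phi0_phi0, ENNReal.ofReal_eq_zero] at h

instance : T2Space (range (phi n)) := by
  refine (t2Space_iff _).2 ?_
  rintro ⟨_, ⟨x⟩, rfl⟩ ⟨_, ⟨y⟩, rfl⟩ hne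
  have hr : 0 < projDist x y := (projDist_nonneg x y).lt_of_ne fun h =>
    hne (Subtype.ext (congrArg (phi n) (RP.mk_eq_mk_of_projDist_eq_zero h.symm)))
  let ball (ν : Measure (Sph n)) : Set (range (phi n)) :=
    Subtype.val ⁻¹' {m | W1 ν m < ENNReal.ofReal (projDist x y / 2)}
  have hopen (ν) : IsOpen (ball ν) :=
    (isOpen_W1_ball ν (half_pos hr)).preimage continuous_subtype_val
  have hcenter (z : Sph n) : W1 (phi0 n z) (phi0 n z) < ENNReal.ofReal (projDist x y / 2) := by
    simpa [W1_self] using half_pos hr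
  refine ⟨ball (phi0 n x), ball (phi0 n y), hopen _, hopen _, hcenter x, hcenter y, ?_⟩
  rw [Set.disjoint_left]
  rintro ⟨_, ⟨z⟩, rfl⟩ (hxz : W1 (phi0 n x) (phi0 n z) < _) (hyz : W1 (phi0 n y) (phi0 n z) < _)
  refine lt_irrefl (ENNReal.ofReal (projDist x y)) ?_
  calc ENNReal.ofReal (projDist x y) = W1 (phi0 n x) (phi0 n y) := (W1_phi0_phi0 x y).symm
    _ ≤ W1 (phi0 n x) (phi0 n z) + W1 (phi0 n y) (phi0 n z) := by
      rw [W1_phi0_phi0 y, projDist_comm]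
      exact W1_phi0_le_add_projDist _ z y
    _ < ENNReal.ofReal (projDist x y / 2) + ENNReal.ofReal (projDist x y / 2) :=
      ENNReal.add_lt_add hxz hyz
    _ = ENNReal.ofReal (projDist x y) := by
      rw [← ENNReal.ofReal_add (half_pos hr).le (half_pos hr).le, add_halves]

instance : CompactSpace (RP n) := Quot.compactSpace

lemma phi_mem_avrmSet : ∀ q : RP n, phi n q ∈ avrmSet n Real.pi := by
  classical
  rintro ⟨x⟩
  refine ⟨{x, antipode x}, fun _ => 1 / 2, fun _ _ => one_half_pos, ?_, ?_, ?_⟩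
  · rw [Finset.sum_pair (antipode_ne_self x).symm]
    norm_num
  · intro a ha b hb hab
    simp only [Finset.mem_insert, Finset.mem_singleton] at ha hb
    rcases ha with rfl | rfl <;> rcases hb with rfl | rfl <;> first
      | exact absurd rfl hab
      | simp [gdist_antipode_self, gdist_antipode_left, gdist_self]
  · rw [Finset.sum_pair (antipode_ne_self x).symm, one_div, ENNReal.ofReal_inv_of_pos two_pos,
      ENNReal.ofReal_ofNat]
    rfl

theorem stmt5_general (n : ℕ) :
    ∃ h : ∀ q : RP n, phi n q ∈ avrmSet n Real.pi,
      Topology.IsEmbedding (fun q : RP n => (⟨phi n q, h q⟩ : AVRm n Real.pi)) :=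
  ⟨phi_mem_avrmSet,
    (continuous_phi.isEmbedding_of_t2Space_range injective_phi).codRestrict _ _⟩

/-- For every `n ≥ 1`, the map `φ : RP^n → AVR^m(S^n; π)` given by
`φ([x]) = (1/2)δ_x + (1/2)δ_{-x}` is a topological embedding of `RP^n` into the
anti-Vietoris–Rips metric thickening `AVR^m(S^n; π)`. -/
theorem stmt5 (n : ℕ) (hn : 1 ≤ n) :
    ∃ h : ∀ q : RP n, phi n q ∈ avrmSet n Real.pi,
      Topology.IsEmbedding (fun q : RP n => (⟨phi n q, h q⟩ : AVRm n Real.pi)) :=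
  stmt5_general n

end
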